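/- arXiv:1212.5449 — 3 statements merged into one kernel-verified Lean document; each statement's English description precedes it below -/
import Mathlib

section
/- For two jointly distributed finite-valued random processes X^1,...,X^T and Y^1,...,Y^T, the mutual information between the full trajectories decomposes as I(X̄^T; Ȳ^T) = T_{X→Y} + T_{Y→X} + R_{X,Y}, where T_{Y→X} = Σ_{t=1}^T I(X^t; Ȳ^{t-1} | X̄^{t-1}) is the pairwise transfer entropy from Y to X, T_{X→Y} = Σ_{t=1}^T I(Y^t; X̄^{t-1} | Ȳ^{t-1}), and R_{X,Y} = Σ_{t=1}^T I(X^t; Y^t | X̄^{t-1}, Ȳ^{t-1}). -/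
open scoped BigOperators

noncomputable section

variable {Ω : Type*} [Fintype Ω] [DecidableEq Ω]

/-- Probability of the event `X = s` under the mass function `p`. -/
def prob (p : Ω → ℝ) {S : Type*} [DecidableEq S] (X : Ω → S) (s : S) : ℝ :=
  ∑ ω, if X ω = s then p ω else 0

/-- Shannon entropy of a finite-valued random variable. -/
def entropy (p : Ω → ℝ) {S : Type*} [Fintype S] [DecidableEq S] (X : Ω → S) : ℝ :=
  -∑ s, prob p X s * Real.log (prob p X s)

/-- Conditional Shannon entropy `H(X | Y)`. -/
def condEntropy (p : Ω → ℝ) {S T' : Type*} [Fintype S] [DecidableEq S] [Fintype T']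
    [DecidableEq T'] (X : Ω → S) (Y : Ω → T') : ℝ :=
  entropy p (fun ω => (X ω, Y ω)) - entropy p Y

/-- Mutual information `I(X; Y)`. -/
def mutualInfo (p : Ω → ℝ) {S T' : Type*} [Fintype S] [DecidableEq S] [Fintype T']
    [DecidableEq T'] (X : Ω → S) (Y : Ω → T') : ℝ :=
  entropy p X - condEntropy p X Y

/-- Conditional mutual information `I(X; Y | Z)`. -/
def condMutualInfo (p : Ω → ℝ) {S T' U : Type*} [Fintype S] [DecidableEq S] [Fintype T']
    [DecidableEq T'] [Fintype U] [DecidableEq U] (X : Ω → S) (Y : Ω → T') (Z : Ω → U) : ℝ :=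
  condEntropy p X Z - condEntropy p X (fun ω => (Y ω, Z ω))

/-- The past trajectory `X̄^{t-1} = (X^0, …, X^{t-1})` (0-indexed). -/
def past {S : Type*} (X : ℕ → Ω → S) (t : ℕ) (ω : Ω) : Fin t → S :=
  fun k => X k ω

/-- `p` is a probability mass function. -/
def IsProb (p : Ω → ℝ) : Prop := (∀ ω, 0 ≤ p ω) ∧ ∑ ω, p ω = 1

/-- Conditional independence of `X` and `Y` given `Z` (for finite-valued random variables). -/
def CondIndep (p : Ω → ℝ) {S T' U : Type*} [DecidableEq S] [DecidableEq T'] [DecidableEq U]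
    (X : Ω → S) (Y : Ω → T') (Z : Ω → U) : Prop :=
  ∀ s t u, prob p (fun ω => (X ω, Y ω, Z ω)) (s, t, u) * prob p Z u =
    prob p (fun ω => (X ω, Z ω)) (s, u) * prob p (fun ω => (Y ω, Z ω)) (t, u)

/-- Pairwise transfer entropy `T_{Y→X}^T = Σ_t I(X^t; Ȳ^{t-1} | X̄^{t-1})` (from `Y` to `X`). -/
def pte (p : Ω → ℝ) {S T' : Type*} [Fintype S] [DecidableEq S] [Fintype T'] [DecidableEq T']
    (Y : ℕ → Ω → T') (X : ℕ → Ω → S) (T : ℕ) : ℝ :=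
  ∑ t ∈ Finset.range T, condMutualInfo p (X t) (past Y t) (past X t)

/-- Entropy rate `H_X^T = Σ_t H(X^t | X̄^{t-1})`. -/
def entropyRate (p : Ω → ℝ) {S : Type*} [Fintype S] [DecidableEq S] (X : ℕ → Ω → S)
    (T : ℕ) : ℝ :=
  ∑ t ∈ Finset.range T, condEntropy p (X t) (past X t)

/-- Free entropy `F_X^T = Σ_t H(X^t | X̄^{t-1}, Ȳ^{t-1})`. -/
def freeEntropy (p : Ω → ℝ) {S T' : Type*} [Fintype S] [DecidableEq S] [Fintype T']
    [DecidableEq T'] (X : ℕ → Ω → S) (Y : ℕ → Ω → T') (T : ℕ) : ℝ :=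
  ∑ t ∈ Finset.range T, condEntropy p (X t) (fun ω => (past X t ω, past Y t ω))

/-- Residual entropy `R_{X,Y}^T = Σ_t I(X^t; Y^t | X̄^{t-1}, Ȳ^{t-1})`. -/
def residualEntropy (p : Ω → ℝ) {S T' : Type*} [Fintype S] [DecidableEq S] [Fintype T']
    [DecidableEq T'] (X : ℕ → Ω → S) (Y : ℕ → Ω → T') (T : ℕ) : ℝ :=
  ∑ t ∈ Finset.range T, condMutualInfo p (X t) (Y t) (fun ω => (past X t ω, past Y t ω))

lemma prob_comp_equiv (p : Ω → ℝ) {S S' : Type*} [DecidableEq S] [DecidableEq S']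
    (X : Ω → S) (e : S ≃ S') (s' : S') :
    prob p (fun ω => e (X ω)) s' = prob p X (e.symm s') := by
  unfold prob
  refine Finset.sum_congr rfl fun ω _ => ?_
  simp [Equiv.apply_eq_iff_eq_symm_apply]

lemma entropy_comp_equiv (p : Ω → ℝ) {S S' : Type*} [Fintype S] [DecidableEq S]
    [Fintype S'] [DecidableEq S'] (X : Ω → S) (e : S ≃ S') :
    entropy p (fun ω => e (X ω)) = entropy p X := by
  unfold entropy
  simp only [prob_comp_equiv]
  congr 1
  exact (Fintype.sum_equiv e (fun s => prob p X s * Real.log (prob p X s))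
    (fun s' => prob p X (e.symm s') * Real.log (prob p X (e.symm s')))
    (fun s => by simp)).symm

lemma entropy_unique (p : Ω → ℝ) (hp : IsProb p) {S : Type*} [Fintype S] [DecidableEq S]
    [Unique S] (X : Ω → S) : entropy p X = 0 := by
  have h : prob p X default = 1 := by
    unfold prob
    simp only [Unique.eq_default, if_true]
    exact hp.2
  unfold entropy
  rw [Fintype.sum_unique, h]
  simp

def snocEquiv (t : ℕ) (S : Type*) : (Fin (t + 1) → S) ≃ S × (Fin t → S) where
  toFun g := (g (Fin.last t), fun k => g k.castSucc)
  invFun x := Fin.snoc x.2 x.1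
  left_inv g := by
    funext i
    induction i using Fin.lastCases with
    | last => simp
    | cast k => simp
  right_inv x := by
    obtain ⟨a, g⟩ := x
    simp

lemma snocEquiv_past {S : Type*} (X : ℕ → Ω → S) (t : ℕ) (ω : Ω) :
    snocEquiv t S (past X (t + 1) ω) = (X t ω, past X t ω) := by
  refine Prod.ext ?_ rfl
  simp [snocEquiv, past]

/-- Decomposition of trajectory mutual information into the two directed pairwise
transfer entropies and the residualEntropy term:
`I(X̄^T; Ȳ^T) = T_{X→Y}^T + T_{Y→X}^T + R_{X,Y}^T`. -/
theorem mutualInfo_eq_pte_add_pte_add_residual (p : Ω → ℝ) (hp : IsProb p)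
    {S T' : Type*} [Fintype S] [DecidableEq S] [Fintype T'] [DecidableEq T']
    (X : ℕ → Ω → S) (Y : ℕ → Ω → T') (T : ℕ) :
    mutualInfo p (past X T) (past Y T) =
      pte p X Y T + pte p Y X T + residualEntropy p X Y T := by
  have hXs : ∀ t : ℕ, entropy p (fun ω => (X t ω, past X t ω)) = entropy p (past X (t + 1)) := by
    intro t
    have h : (fun ω => (X t ω, past X t ω)) = fun ω => snocEquiv t S (past X (t + 1) ω) := by
      funext ω; exact (snocEquiv_past X t ω).symm
    rw [h, entropy_comp_equiv]
  have hYs : ∀ t : ℕ, entropy p (fun ω => (Y t ω, past Y t ω)) = entropy p (past Y (t + 1)) := by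
    intro t
    have h : (fun ω => (Y t ω, past Y t ω)) = fun ω => snocEquiv t T' (past Y (t + 1) ω) := by
      funext ω; exact (snocEquiv_past Y t ω).symm
    rw [h, entropy_comp_equiv]
  have hCswap : ∀ t : ℕ, entropy p (fun ω => (past Y t ω, past X t ω))
      = entropy p (fun ω => (past X t ω, past Y t ω)) := by
    intro t
    have h : (fun ω => (past Y t ω, past X t ω))
        = fun ω => (Equiv.prodComm (Fin t → S) (Fin t → T'))
            ((fun ω => (past X t ω, past Y t ω)) ω) := rfl
    rw [h, entropy_comp_equiv]
  have hJswap : ∀ t : ℕ,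
      entropy p (fun ω => (X t ω, (past Y t ω, past X t ω)))
        = entropy p (fun ω => (X t ω, (past X t ω, past Y t ω))) := by
    intro t
    have h : (fun ω => (X t ω, (past Y t ω, past X t ω)))
        = fun ω => ((Equiv.refl S).prodCongr (Equiv.prodComm (Fin t → S) (Fin t → T')))
            ((fun ω => (X t ω, (past X t ω, past Y t ω))) ω) := rfl
    rw [h, entropy_comp_equiv]
  have hCs : ∀ t : ℕ,
      entropy p (fun ω => (X t ω, (Y t ω, (past X t ω, past Y t ω))))
        = entropy p (fun ω => (past X (t + 1) ω, past Y (t + 1) ω)) := by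
    intro t
    have h : (fun ω => (X t ω, (Y t ω, (past X t ω, past Y t ω))))
        = fun ω => (((snocEquiv t S).prodCongr (snocEquiv t T')).trans
            ((Equiv.prodProdProdComm S (Fin t → S) T' (Fin t → T')).trans
              (Equiv.prodAssoc S T' ((Fin t → S) × (Fin t → T')))))
            ((fun ω => (past X (t + 1) ω, past Y (t + 1) ω)) ω) := by
      funext ω
      simp [snocEquiv_past, Equiv.prodProdProdComm, Equiv.prodAssoc]
    rw [h, entropy_comp_equiv]
  set D : ℕ → ℝ := fun t => entropy p (past X t) + entropy p (past Y t)
      - entropy p (fun ω => (past X t ω, past Y t ω)) with hD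
  have key : ∀ t : ℕ,
      condMutualInfo p (Y t) (past X t) (past Y t)
        + condMutualInfo p (X t) (past Y t) (past X t)
        + condMutualInfo p (X t) (Y t) (fun ω => (past X t ω, past Y t ω))
      = D (t + 1) - D t := by
    intro t
    simp only [hD, condMutualInfo, condEntropy]
    rw [hXs, hYs, hCswap, hJswap, hCs]
    ring
  have hsum : pte p X Y T + pte p Y X T + residualEntropy p X Y T
      = ∑ t ∈ Finset.range T, (D (t + 1) - D t) := by
    unfold pte residualEntropy
    rw [← Finset.sum_add_distrib, ← Finset.sum_add_distrib]
    exact Finset.sum_congr rfl fun t _ => key t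
  have hD0 : D 0 = 0 := by
    haveI : Unique ((Fin 0 → S) × (Fin 0 → T')) :=
      ⟨⟨(default, default)⟩, fun x => Prod.ext (Subsingleton.elim _ _) (Subsingleton.elim _ _)⟩
    simp only [hD]
    rw [entropy_unique p hp, entropy_unique p hp, entropy_unique p hp]
    ring
  rw [hsum, Finset.sum_range_sub D, hD0, sub_zero]
  simp only [hD, mutualInfo, condEntropy]
  ring


end
end

section
/- Marko's inequality for two processes: min(H_X^T, H_Y^T) ≥ T_{X→Y}^T + T_{Y→X}^T, i.e., the sum of the two directed transfer entropies is bounded above by each of the entropy rates H_X^T = Σ_{t=1}^T H(X^t|X̄^{t-1}) and H_Y^T = Σ_{t=1}^T H(Y^t|Ȳ^{t-1}). -/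
/-
By the chain rule `H_X^T = H(X̄^T)`, and the mutual information of the pasts grows in each step by
`I(X̄^{t+1}; Ȳ^{t+1}) - I(X̄^t; Ȳ^t)
  = I(X^t; Ȳ^t | X̄^t) + I(Y^t; X̄^t | Ȳ^t) + I(X^t; Y^t | X̄^t, Ȳ^t)`.
Summing over `t`, the two transfer entropies plus the (nonnegative) residual entropy equal
`I(X̄^T; Ȳ^T)`, which is at most `min (H(X̄^T)) (H(Ȳ^T))`. Nonnegativity of conditional mutual
information is Gibbs' inequality `log x ≤ x - 1`.
-/

open scoped BigOperators

lemma past_succ {Ω α : Type*} (X : ℕ → Ω → α) (t : ℕ) :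
    past X (t + 1) = fun ω => Fin.snoc (past X t ω) (X t ω) := by
  funext ω k
  induction k using Fin.lastCases <;> simp [past]

section

open Real Finset

variable {Ω : Type*} [Fintype Ω] {p : Ω → ℝ}

lemma prob_nonneg (hp : ∀ ω, 0 ≤ p ω) {α : Type*} [DecidableEq α] (X : Ω → α) (a : α) :
    0 ≤ prob p X a :=
  sum_nonneg fun ω _ => by split_ifs <;> simp [hp ω]

lemma sum_prob_pair_left {α β : Type*} [Fintype α] [DecidableEq α] [DecidableEq β]
    (X : Ω → α) (Y : Ω → β) (b : β) :
    ∑ a, prob p (fun ω => (X ω, Y ω)) (a, b) = prob p Y b := by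
  unfold prob
  rw [sum_comm]
  refine sum_congr rfl fun ω _ => ?_
  by_cases h : Y ω = b <;> simp [Prod.ext_iff, h]

lemma sum_prob_triple_mid {α β γ : Type*} [DecidableEq α] [Fintype β] [DecidableEq β]
    [DecidableEq γ] (X : Ω → α) (Y : Ω → β) (Z : Ω → γ) (a : α) (c : γ) :
    ∑ b, prob p (fun ω => (X ω, Y ω, Z ω)) (a, b, c) = prob p (fun ω => (X ω, Z ω)) (a, c) := by
  unfold prob
  rw [sum_comm]
  refine sum_congr rfl fun ω _ => ?_
  by_cases hX : X ω = a <;> by_cases hZ : Z ω = c <;> simp [Prod.ext_iff, hX, hZ]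

lemma entropy_comp_of_injective (p : Ω → ℝ) {α β : Type*} [Fintype α] [DecidableEq α]
    [Fintype β] [DecidableEq β] {f : α → β} (hf : Function.Injective f) (X : Ω → α) :
    entropy p (fun ω => f (X ω)) = entropy p X := by
  have prob_image : ∀ a, prob p (fun ω => f (X ω)) (f a) = prob p X a := fun a =>
    sum_congr rfl fun ω _ => by simp only [hf.eq_iff]
  have prob_off_range : ∀ b ∉ Set.range f, prob p (fun ω => f (X ω)) b = 0 := fun b hb =>
    sum_eq_zero fun ω _ => if_neg fun h => hb ⟨X ω, h⟩
  unfold entropy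
  congr 1
  symm
  exact Fintype.sum_of_injective f hf _ _ (fun b hb => by simp [prob_off_range b hb])
    (fun a => by rw [prob_image])

lemma entropy_pair_comm (p : Ω → ℝ) {α β : Type*} [Fintype α] [DecidableEq α] [Fintype β]
    [DecidableEq β] (X : Ω → α) (Y : Ω → β) :
    entropy p (fun ω => (X ω, Y ω)) = entropy p (fun ω => (Y ω, X ω)) :=
  entropy_comp_of_injective p Prod.swap_injective (fun ω => (Y ω, X ω))

lemma entropy_eq_zero_of_subsingleton (hp1 : ∑ ω, p ω = 1) {α : Type*} [Fintype α]
    [DecidableEq α] [Subsingleton α] (X : Ω → α) : entropy p X = 0 := by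
  have h : ∀ a, prob p X a = 1 := fun a => by
    rw [← hp1]
    exact sum_congr rfl fun ω _ => if_pos (Subsingleton.elim _ _)
  simp [entropy, h]

lemma mul_log_ratio_le {a b c d : ℝ} (ha : 0 ≤ a) (hab : a ≤ b) (hac : a ≤ c) (had : a ≤ d) :
    a * (log b + log c - log a - log d) ≤ b * c / d - a := by
  obtain rfl | ha := ha.eq_or_lt
  · have : 0 ≤ b * c / d := div_nonneg (mul_nonneg hab hac) had
    simpa using this
  have hb := ha.trans_le hab
  have hc := ha.trans_le hac
  have hd := ha.trans_le had
  have hlog : log b + log c - log a - log d = log (b * c / (a * d)) := by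
    rw [log_div (by positivity) (by positivity), log_mul hb.ne' hc.ne', log_mul ha.ne' hd.ne']
    ring
  calc a * (log b + log c - log a - log d) ≤ a * (b * c / (a * d) - 1) := by
        rw [hlog]
        exact mul_le_mul_of_nonneg_left (log_le_sub_one_of_pos (by positivity)) ha.le
    _ = b * c / d - a := by field_simp

/-- `I(X; Y | Z) ≥ 0`, written for the joint mass `a` of `(X, Y, Z)` and its marginals `b`, `c`, `d`
of `(X, Z)`, `(Y, Z)`, `Z`. -/
lemma sum_mul_log_marginals_le {α β γ : Type*} [Fintype α] [Fintype β] [Fintype γ]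
    {a : α → β → γ → ℝ} {b : α → γ → ℝ} {c : β → γ → ℝ} {d : γ → ℝ}
    (ha : ∀ x y z, 0 ≤ a x y z) (hb : ∀ x z, b x z = ∑ y, a x y z)
    (hc : ∀ y z, c y z = ∑ x, a x y z) (hd : ∀ z, d z = ∑ y, c y z) :
    ∑ x, ∑ z, b x z * log (b x z) + ∑ y, ∑ z, c y z * log (c y z) ≤
      ∑ x, ∑ y, ∑ z, a x y z * log (a x y z) + ∑ z, d z * log (d z) := by
  have hdb : ∀ z, d z = ∑ x, b x z := fun z => by simp only [hd, hc, hb]; exact sum_comm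
  have hab : ∀ x y z, a x y z ≤ b x z := fun x y z => by
    rw [hb]; exact single_le_sum (fun y _ => ha x y z) (mem_univ y)
  have hac : ∀ x y z, a x y z ≤ c y z := fun x y z => by
    rw [hc]; exact single_le_sum (fun x _ => ha x y z) (mem_univ x)
  have hbd : ∀ x z, b x z ≤ d z := fun x z => by
    rw [hdb]
    exact single_le_sum (fun x _ => hb x z ▸ sum_nonneg fun y _ => ha x y z) (mem_univ x)
  have gibbs : ∑ x, ∑ y, ∑ z, a x y z *
      (log (b x z) + log (c y z) - log (a x y z) - log (d z)) ≤ 0 :=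
    calc _ ≤ ∑ x, ∑ y, ∑ z, (b x z * c y z / d z - a x y z) :=
          sum_le_sum fun x _ => sum_le_sum fun y _ => sum_le_sum fun z _ =>
            mul_log_ratio_le (ha x y z) (hab x y z) (hac x y z) ((hab x y z).trans (hbd x z))
      _ = ∑ z, ∑ x, ∑ y, (b x z * c y z / d z - a x y z) :=
          (sum_congr rfl fun x _ => sum_comm).trans sum_comm
      _ = 0 := sum_eq_zero fun z _ => by
          simp only [sum_sub_distrib, ← sum_div, ← mul_sum, ← sum_mul, ← hb, ← hd, ← hdb,
            mul_self_div_self, sub_self]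
  have hlogb : ∑ x, ∑ y, ∑ z, a x y z * log (b x z) = ∑ x, ∑ z, b x z * log (b x z) :=
    sum_congr rfl fun x _ => by
      rw [sum_comm]; exact sum_congr rfl fun z _ => by rw [← sum_mul, ← hb]
  have hlogc : ∑ x, ∑ y, ∑ z, a x y z * log (c y z) = ∑ y, ∑ z, c y z * log (c y z) := by
    rw [sum_comm]
    refine sum_congr rfl fun y _ => ?_
    rw [sum_comm]; exact sum_congr rfl fun z _ => by rw [← sum_mul, ← hc]
  have hlogd : ∑ x, ∑ y, ∑ z, a x y z * log (d z) = ∑ z, d z * log (d z) :=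
    calc _ = ∑ x, ∑ z, b x z * log (d z) := sum_congr rfl fun x _ => by
          rw [sum_comm]; exact sum_congr rfl fun z _ => by rw [← sum_mul, ← hb]
      _ = _ := by
          rw [sum_comm]; exact sum_congr rfl fun z _ => by rw [← sum_mul, ← hdb]
  simp only [mul_add, mul_sub, sum_add_distrib, sum_sub_distrib, hlogb, hlogc, hlogd] at gibbs
  linarith

lemma condMutualInfo_nonneg (hp : ∀ ω, 0 ≤ p ω) {α β γ : Type*} [Fintype α] [DecidableEq α]
    [Fintype β] [DecidableEq β] [Fintype γ] [DecidableEq γ]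
    (X : Ω → α) (Y : Ω → β) (Z : Ω → γ) : 0 ≤ condMutualInfo p X Y Z := by
  have h := sum_mul_log_marginals_le
    (a := fun x y z => prob p (fun ω => (X ω, Y ω, Z ω)) (x, y, z))
    (fun x y z => prob_nonneg hp _ (x, y, z)) (fun x z => (sum_prob_triple_mid X Y Z x z).symm)
    (fun y z => (sum_prob_pair_left X _ (y, z)).symm) (fun z => (sum_prob_pair_left Y Z z).symm)
  simp only [condMutualInfo, condEntropy, entropy, Fintype.sum_prod_type]
  linarith only [h]

lemma condEntropy_nonneg (hp : ∀ ω, 0 ≤ p ω) {α β : Type*} [Fintype α] [DecidableEq α]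
    [Fintype β] [DecidableEq β] (X : Ω → α) (Y : Ω → β) : 0 ≤ condEntropy p X Y := by
  -- `H(X | Y) = I(X; X | Y)` because `H(X | X, Y) = 0`.
  have hself : condEntropy p X (fun ω => (X ω, Y ω)) = 0 := by
    rw [condEntropy, sub_eq_zero]
    exact entropy_comp_of_injective p (f := fun q : α × β => (q.1, q))
      (fun _ _ h => (Prod.ext_iff.mp h).2) (fun ω => (X ω, Y ω))
  simpa [condMutualInfo, hself] using condMutualInfo_nonneg hp X X Y

lemma mutualInfo_comm (p : Ω → ℝ) {α β : Type*} [Fintype α] [DecidableEq α]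
    [Fintype β] [DecidableEq β] (X : Ω → α) (Y : Ω → β) :
    mutualInfo p X Y = mutualInfo p Y X := by
  simp only [mutualInfo, condEntropy, entropy_pair_comm p X Y]
  ring

lemma mutualInfo_le_entropy_left (hp : ∀ ω, 0 ≤ p ω) {α β : Type*} [Fintype α] [DecidableEq α]
    [Fintype β] [DecidableEq β] (X : Ω → α) (Y : Ω → β) : mutualInfo p X Y ≤ entropy p X :=
  sub_le_self _ (condEntropy_nonneg hp X Y)

lemma mutualInfo_le_entropy_right (hp : ∀ ω, 0 ≤ p ω) {α β : Type*} [Fintype α]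
    [DecidableEq α] [Fintype β] [DecidableEq β] (X : Ω → α) (Y : Ω → β) :
    mutualInfo p X Y ≤ entropy p Y :=
  mutualInfo_comm p X Y ▸ mutualInfo_le_entropy_left hp Y X

lemma entropy_past_succ (p : Ω → ℝ) {α : Type*} [Fintype α] [DecidableEq α]
    (X : ℕ → Ω → α) (t : ℕ) :
    entropy p (past X (t + 1)) = entropy p (fun ω => (X t ω, past X t ω)) := by
  have hf : Function.Injective fun q : α × (Fin t → α) =>
      (Fin.snoc q.2 q.1 : Fin (t + 1) → α) := by
    rintro ⟨x, xs⟩ ⟨x', xs'⟩ h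
    simp_all [Fin.snoc_inj]
  rw [past_succ]
  exact entropy_comp_of_injective p hf (fun ω => (X t ω, past X t ω))

lemma entropy_past_pair_succ (p : Ω → ℝ) {α β : Type*} [Fintype α] [DecidableEq α]
    [Fintype β] [DecidableEq β] (X : ℕ → Ω → α) (Y : ℕ → Ω → β) (t : ℕ) :
    entropy p (fun ω => (past X (t + 1) ω, past Y (t + 1) ω)) =
      entropy p (fun ω => (X t ω, Y t ω, past X t ω, past Y t ω)) := by
  have hf : Function.Injective fun q : α × β × (Fin t → α) × (Fin t → β) =>
      ((Fin.snoc q.2.2.1 q.1 : Fin (t + 1) → α),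
        (Fin.snoc q.2.2.2 q.2.1 : Fin (t + 1) → β)) := by
    rintro ⟨x, y, xs, ys⟩ ⟨x', y', xs', ys'⟩ h
    simp only [Prod.mk.injEq, Fin.snoc_inj] at h
    simp [h]
  simp_rw [past_succ]
  exact entropy_comp_of_injective p hf (fun ω => (X t ω, Y t ω, past X t ω, past Y t ω))

lemma entropyRate_eq_entropy_past (hp1 : ∑ ω, p ω = 1) {α : Type*} [Fintype α] [DecidableEq α]
    (X : ℕ → Ω → α) (T : ℕ) : entropyRate p X T = entropy p (past X T) := by
  rw [← sub_zero (entropy p (past X T)), ← entropy_eq_zero_of_subsingleton hp1 (past X 0),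
    ← sum_range_sub fun t => entropy p (past X t)]
  exact sum_congr rfl fun t _ => by rw [entropy_past_succ]; rfl

lemma mutualInfo_past_succ (p : Ω → ℝ) {α β : Type*} [Fintype α] [DecidableEq α]
    [Fintype β] [DecidableEq β] (X : ℕ → Ω → α) (Y : ℕ → Ω → β) (t : ℕ) :
    mutualInfo p (past X (t + 1)) (past Y (t + 1)) =
      mutualInfo p (past X t) (past Y t) + condMutualInfo p (X t) (past Y t) (past X t) +
        condMutualInfo p (Y t) (past X t) (past Y t) +
        condMutualInfo p (X t) (Y t) (fun ω => (past X t ω, past Y t ω)) := by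
  have hswap : entropy p (fun ω => (X t ω, past Y t ω, past X t ω)) =
      entropy p (fun ω => (X t ω, past X t ω, past Y t ω)) :=
    entropy_comp_of_injective p (Function.injective_id.prodMap Prod.swap_injective)
      (fun ω => (X t ω, past X t ω, past Y t ω))
  simp only [mutualInfo, condMutualInfo, condEntropy, entropy_past_succ, entropy_past_pair_succ,
    hswap, entropy_pair_comm p (past Y t) (past X t)]
  ring

lemma pte_add_pte_add_residualEntropy (hp1 : ∑ ω, p ω = 1) {α β : Type*} [Fintype α]
    [DecidableEq α] [Fintype β] [DecidableEq β] (X : ℕ → Ω → α) (Y : ℕ → Ω → β) (T : ℕ) :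
    pte p X Y T + pte p Y X T + residualEntropy p X Y T =
      mutualInfo p (past X T) (past Y T) := by
  have h0 : mutualInfo p (past X 0) (past Y 0) = 0 := by
    simp [mutualInfo, condEntropy, entropy_eq_zero_of_subsingleton hp1]
  rw [← sub_zero (mutualInfo p _ _), ← h0,
    ← sum_range_sub fun t => mutualInfo p (past X t) (past Y t)]
  simp only [pte, residualEntropy, ← sum_add_distrib]
  exact sum_congr rfl fun t _ => by rw [mutualInfo_past_succ]; ring

lemma residualEntropy_nonneg (hp : ∀ ω, 0 ≤ p ω) {α β : Type*} [Fintype α] [DecidableEq α]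
    [Fintype β] [DecidableEq β] (X : ℕ → Ω → α) (Y : ℕ → Ω → β) (T : ℕ) :
    0 ≤ residualEntropy p X Y T :=
  sum_nonneg fun _ _ => condMutualInfo_nonneg hp _ _ _

end

variable {Ω : Type*} [Fintype Ω] [DecidableEq Ω]

/-- Marko's inequality: `min(H_X^T, H_Y^T) ≥ T_{X→Y}^T + T_{Y→X}^T`. -/
theorem marko_inequality (p : Ω → ℝ) (hp : IsProb p)
    {S T' : Type*} [Fintype S] [DecidableEq S] [Fintype T'] [DecidableEq T']
    (X : ℕ → Ω → S) (Y : ℕ → Ω → T') (T : ℕ) :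
    pte p X Y T + pte p Y X T ≤ min (entropyRate p X T) (entropyRate p Y T) := by
  obtain ⟨hp0, hp1⟩ := hp
  have hsum := pte_add_pte_add_residualEntropy hp1 X Y T
  have hR := residualEntropy_nonneg hp0 X Y T
  rw [entropyRate_eq_entropy_past hp1, entropyRate_eq_entropy_past hp1]
  exact le_min (by linarith [mutualInfo_le_entropy_left hp0 (past X T) (past Y T)])
    (by linarith [mutualInfo_le_entropy_right hp0 (past X T) (past Y T)])
end

section
/- If T_{Y→X}^T + R_{X,Y}^T = 0 (no feedback from Y to X and no instantaneous residual coupling), then the mutual information of the trajectories equals the transfer entropy from X to Y: I(X̄^T; Ȳ^T) = T_{X→Y}^T. -/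
open scoped BigOperators

noncomputable section

variable {Ω : Type*} [Fintype Ω] [DecidableEq Ω]

section MyHelpers

variable (p : Ω → ℝ)

lemma my_entropy_comp_inj {S U : Type*} [Fintype S] [DecidableEq S] [Fintype U] [DecidableEq U]
    (X : Ω → S) (f : S → U) (hf : Function.Injective f) :
    entropy p (fun ω => f (X ω)) = entropy p X := by
  unfold entropy
  congr 1
  have h0 : ∀ u ∈ (Finset.univ : Finset U), u ∉ Finset.image f Finset.univ →
      prob p (fun ω => f (X ω)) u * Real.log (prob p (fun ω => f (X ω)) u) = 0 := by
    intro u _ hu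
    have : prob p (fun ω => f (X ω)) u = 0 := by
      refine Finset.sum_eq_zero fun ω _ => ?_
      have : f (X ω) ≠ u := fun hc => hu (Finset.mem_image.2 ⟨X ω, Finset.mem_univ _, hc⟩)
      simp [this]
    simp [this]
  rw [← Finset.sum_subset (Finset.subset_univ (Finset.image f Finset.univ)) h0,
    Finset.sum_image (fun a _ b _ h => hf h)]
  refine Finset.sum_congr rfl fun s _ => ?_
  have : prob p (fun ω => f (X ω)) (f s) = prob p X s := by
    refine Finset.sum_congr rfl fun ω _ => ?_
    simp [hf.eq_iff]
  rw [this]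

lemma my_entropy_subsingleton {S : Type*} [Fintype S] [DecidableEq S] [Subsingleton S]
    (hp : IsProb p) (X : Ω → S) : entropy p X = 0 := by
  unfold entropy
  have hprob : ∀ s, prob p X s = 1 := fun s => by
    unfold prob
    rw [Finset.sum_congr rfl fun ω _ => if_pos (Subsingleton.elim _ _)]
    exact hp.2
  simp [hprob]

lemma my_entropy_pair_chain {S T' : Type*} [Fintype S] [DecidableEq S] [Fintype T']
    [DecidableEq T'] (A : Ω → S) (B : Ω → T') :
    entropy p (fun ω => (A ω, B ω)) = entropy p B + condEntropy p A B := by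
  unfold condEntropy; ring

lemma my_entropy_pair_comm {S T' : Type*} [Fintype S] [DecidableEq S] [Fintype T']
    [DecidableEq T'] (A : Ω → S) (B : Ω → T') :
    entropy p (fun ω => (A ω, B ω)) = entropy p (fun ω => (B ω, A ω)) := by
  have := my_entropy_comp_inj p (fun ω => (B ω, A ω)) Prod.swap Prod.swap_injective
  simpa using this

lemma my_entropy_pair_assoc {S T' U : Type*} [Fintype S] [DecidableEq S] [Fintype T']
    [DecidableEq T'] [Fintype U] [DecidableEq U] (A : Ω → S) (B : Ω → T') (C : Ω → U) :
    entropy p (fun ω => ((A ω, B ω), C ω)) = entropy p (fun ω => (A ω, (B ω, C ω))) := by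
  have hf : Function.Injective (fun q : S × (T' × U) => ((q.1, q.2.1), q.2.2)) := by
    rintro ⟨a, b, c⟩ ⟨a', b', c'⟩ hq
    simp only [Prod.mk.injEq] at hq
    obtain ⟨⟨h1, h2⟩, h3⟩ := hq
    simp [h1, h2, h3]
  simpa using my_entropy_comp_inj p (fun ω => (A ω, (B ω, C ω))) _ hf

lemma my_entropy_pair_right_comm {S T' U : Type*} [Fintype S] [DecidableEq S] [Fintype T']
    [DecidableEq T'] [Fintype U] [DecidableEq U] (A : Ω → S) (B : Ω → T') (C : Ω → U) :
    entropy p (fun ω => (A ω, (B ω, C ω))) = entropy p (fun ω => (A ω, (C ω, B ω))) := by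
  have hf : Function.Injective (fun q : S × (U × T') => ((q.1, (q.2.2, q.2.1)) : S × (T' × U))) := by
    rintro ⟨a, c, b⟩ ⟨a', c', b'⟩ hq
    simp only [Prod.mk.injEq] at hq
    obtain ⟨h1, h2, h3⟩ := hq
    simp [h1, h2, h3]
  have := my_entropy_comp_inj p (fun ω => (A ω, (C ω, B ω))) _ hf
  simp only at this
  exact this

lemma my_condEntropy_comm {S T' U : Type*} [Fintype S] [DecidableEq S] [Fintype T']
    [DecidableEq T'] [Fintype U] [DecidableEq U] (A : Ω → S) (B : Ω → T') (C : Ω → U) :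
    condEntropy p A (fun ω => (B ω, C ω)) = condEntropy p A (fun ω => (C ω, B ω)) := by
  unfold condEntropy
  rw [my_entropy_pair_comm p B C, my_entropy_pair_right_comm p A B C]

lemma my_condEntropy_pair_chain {S T' U : Type*} [Fintype S] [DecidableEq S] [Fintype T']
    [DecidableEq T'] [Fintype U] [DecidableEq U] (A : Ω → S) (B : Ω → T') (C : Ω → U) :
    condEntropy p (fun ω => (A ω, B ω)) C =
      condEntropy p B C + condEntropy p A (fun ω => (B ω, C ω)) := by
  unfold condEntropy
  have := my_entropy_pair_assoc p A B C
  beta_reduce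
  linarith

end MyHelpers

section MyTraj
variable (p : Ω → ℝ)

lemma my_past_succ {S : Type*} (X : ℕ → Ω → S) (t : ℕ) (ω : Ω) :
    past X (t + 1) ω = Fin.snoc (past X t ω) (X t ω) := by
  funext k
  refine Fin.lastCases ?_ (fun j => ?_) k
  · simp [past]
  · simp [past]

lemma my_snoc_inj {S : Type*} (t : ℕ) :
    Function.Injective (fun q : S × (Fin t → S) => (Fin.snoc q.2 q.1 : Fin (t + 1) → S)) := by
  rintro ⟨x, v⟩ ⟨x', v'⟩ hq
  simp only at hq
  simp only [Prod.mk.injEq]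
  constructor
  · have := congrFun hq (Fin.last t); simpa using this
  · funext j; have := congrFun hq (Fin.castSucc j); simpa using this

lemma my_entropy_past_succ {S : Type*} [Fintype S] [DecidableEq S] (X : ℕ → Ω → S) (t : ℕ) :
    entropy p (past X (t + 1)) = entropy p (past X t) + condEntropy p (X t) (past X t) := by
  have h1 : past X (t + 1) = fun ω => Fin.snoc (past X t ω) (X t ω) :=
    funext fun ω => my_past_succ X t ω
  rw [h1]
  have h2 := my_entropy_comp_inj p (fun ω => (X t ω, past X t ω)) _ (my_snoc_inj t)
  simp only at h2
  rw [h2]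
  exact my_entropy_pair_chain p (X t) (past X t)

lemma my_entropy_past (hp : IsProb p) {S : Type*} [Fintype S] [DecidableEq S]
    (X : ℕ → Ω → S) (T : ℕ) :
    entropy p (past X T) = entropyRate p X T := by
  induction T with
  | zero =>
    haveI : Subsingleton (Fin 0 → S) := ⟨fun a b => funext fun k => k.elim0⟩
    simp [entropyRate, my_entropy_subsingleton p hp]
  | succ t ih =>
    rw [my_entropy_past_succ, ih]
    unfold entropyRate
    rw [Finset.sum_range_succ]

lemma my_entropy_pairpast (hp : IsProb p) {S T' : Type*} [Fintype S] [DecidableEq S]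
    [Fintype T'] [DecidableEq T'] (X : ℕ → Ω → S) (Y : ℕ → Ω → T') (T : ℕ) :
    entropy p (fun ω => (past X T ω, past Y T ω)) =
      ∑ t ∈ Finset.range T,
        (condEntropy p (Y t) (fun ω => (past X t ω, past Y t ω)) +
          condEntropy p (X t) (fun ω => (Y t ω, (past X t ω, past Y t ω)))) := by
  induction T with
  | zero =>
    haveI : Subsingleton (Fin 0 → S) := ⟨fun a b => funext fun k => k.elim0⟩
    haveI : Subsingleton (Fin 0 → T') := ⟨fun a b => funext fun k => k.elim0⟩
    simp [my_entropy_subsingleton p hp]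
  | succ t ih =>
    rw [Finset.sum_range_succ, ← ih]
    have hf : Function.Injective
        (fun q : (S × T') × ((Fin t → S) × (Fin t → T')) =>
          ((Fin.snoc q.2.1 q.1.1 : Fin (t + 1) → S),
           (Fin.snoc q.2.2 q.1.2 : Fin (t + 1) → T'))) := by
      rintro ⟨⟨x, y⟩, ⟨v, w⟩⟩ ⟨⟨x', y'⟩, ⟨v', w'⟩⟩ hq
      simp only [Prod.mk.injEq] at hq
      have h1 := my_snoc_inj (S := S) t (a₁ := (x, v)) (a₂ := (x', v')) hq.1
      have h2 := my_snoc_inj (S := T') t (a₁ := (y, w)) (a₂ := (y', w')) hq.2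
      simp only [Prod.mk.injEq] at h1 h2
      simp [h1.1, h1.2, h2.1, h2.2]
    have step1 : entropy p (fun ω => (past X (t + 1) ω, past Y (t + 1) ω)) =
        entropy p (fun ω => ((X t ω, Y t ω), (past X t ω, past Y t ω))) := by
      have := my_entropy_comp_inj p
        (fun ω => ((X t ω, Y t ω), (past X t ω, past Y t ω))) _ hf
      simp only at this
      rw [← this]
      congr 1
      funext ω
      rw [my_past_succ X t ω, my_past_succ Y t ω]
    have step2 := my_entropy_pair_chain p (fun ω => (X t ω, Y t ω))
      (fun ω => (past X t ω, past Y t ω))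
    have step3 := my_condEntropy_pair_chain p (X t) (Y t)
      (fun ω => (past X t ω, past Y t ω))
    beta_reduce at step2 step3 ⊢
    rw [step1, step2, step3]


end MyTraj

/-- If there is no feedback from `Y` to `X` and no residualEntropy coupling
(`T_{Y→X}^T + R_{X,Y}^T = 0`), the trajectory mutual information equals the transfer
entropy from `X` to `Y`. -/
theorem mutualInfo_eq_pte_of_no_feedback (p : Ω → ℝ) (hp : IsProb p)
    {S T' : Type*} [Fintype S] [DecidableEq S] [Fintype T'] [DecidableEq T']
    (X : ℕ → Ω → S) (Y : ℕ → Ω → T') (T : ℕ)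
    (h : pte p Y X T + residualEntropy p X Y T = 0) :
    mutualInfo p (past X T) (past Y T) = pte p X Y T := by
  have key : mutualInfo p (past X T) (past Y T) =
      pte p X Y T + (pte p Y X T + residualEntropy p X Y T) := by
    have hmi : mutualInfo p (past X T) (past Y T) =
        entropy p (past X T) + entropy p (past Y T) -
          entropy p (fun ω => (past X T ω, past Y T ω)) := by
      unfold mutualInfo condEntropy; ring
    rw [hmi, my_entropy_past p hp X T, my_entropy_past p hp Y T,
      my_entropy_pairpast p hp X Y T]
    unfold entropyRate pte residualEntropy condMutualInfo
    have hswap : ∀ t ∈ Finset.range T,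
        condEntropy p (X t) (past X t) -
          condEntropy p (X t) (fun ω => (past Y t ω, past X t ω)) =
        condEntropy p (X t) (past X t) -
          condEntropy p (X t) (fun ω => (past X t ω, past Y t ω)) := by
      intro t _
      rw [my_condEntropy_comm p (X t) (past Y t) (past X t)]
    rw [Finset.sum_congr rfl hswap]
    rw [Finset.sum_add_distrib, Finset.sum_sub_distrib, Finset.sum_sub_distrib,
      Finset.sum_sub_distrib]
    ring
  rw [key, h, add_zero]

end
end
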